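/- For every n ≥ 2 there exists a complete NFA with state set Q = {1,2,…,n} and exactly 2n−2 symbols such that the shortest word synchronizing the full state set Q has length exactly 2^{n−1} − 1, and the shortest word synchronizing the subset {n−1, n} has length exactly 2^{n−2}. -/

import Mathlib

/-!
The automaton is a binary counter on the states `0, …, n - 2` together with a sink `n - 1` that
every letter keeps. Give state `q < n - 1` the weight `2 ^ q` and the sink the weight `0`. On sets
containing the sink no letter lowers the total weight by more than one, the letter named after the
lowest set bit lowers it by exactly one, and weight `0` means being the singleton of the sink.
Hence the shortest synchronizing word of such a set is as long as its weight: `2 ^ (n - 1) - 1`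
for all of `Q` and `2 ^ (n - 2)` for `{n - 2, n - 1}`.
-/

/-- Action of an NFA transition function on a subset of states along a word. -/
def nfaRun {n m : ℕ} (δ : Fin n → Fin m → Finset (Fin n)) :
    Finset (Fin n) → List (Fin m) → Finset (Fin n)
  | S, [] => S
  | S, a :: w => nfaRun δ (S.biUnion fun q => δ q a) w

/-- A word `w` synchronizes the subset `S` in the NFA `δ`. -/
def nfaSync {n m : ℕ} (δ : Fin n → Fin m → Finset (Fin n)) (S : Finset (Fin n))
    (w : List (Fin m)) : Prop :=
  (nfaRun δ S w).card = 1

/-- `l` is the length of a shortest word synchronizing `S` in the NFA `δ`. -/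
def nfaShortestSync {n m : ℕ} (δ : Fin n → Fin m → Finset (Fin n)) (S : Finset (Fin n))
    (l : ℕ) : Prop :=
  (∃ w, nfaSync δ S w ∧ w.length = l) ∧ ∀ w, nfaSync δ S w → l ≤ w.length

open Finset

section Potential

variable {n m : ℕ} {δ : Fin n → Fin m → Finset (Fin n)}

theorem nfaRun_cons (S : Finset (Fin n)) (a : Fin m) (w : List (Fin m)) :
    nfaRun δ S (a :: w) = nfaRun δ (nfaRun δ S [a]) w := rfl

variable (P : Finset (Fin n) → Prop) (V : Finset (Fin n) → ℕ)

theorem le_potential_nfaRun_add_length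
    (hP : ∀ S a, P S → P (nfaRun δ S [a]))
    (hle : ∀ S a, P S → V S ≤ V (nfaRun δ S [a]) + 1) :
    ∀ (w : List (Fin m)) (S : Finset (Fin n)), P S →
      P (nfaRun δ S w) ∧ V S ≤ V (nfaRun δ S w) + w.length
  | [], _, hS => ⟨hS, le_rfl⟩
  | a :: w, S, hS => by
    obtain ⟨hPw, hVw⟩ := le_potential_nfaRun_add_length hP hle w _ (hP S a hS)
    have := hle S a hS
    exact ⟨hPw, by rw [nfaRun_cons, List.length_cons]; omega⟩

theorem exists_nfaRun_potential_eq_zero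
    (hP : ∀ S a, P S → P (nfaRun δ S [a]))
    (hdec : ∀ S, P S → V S ≠ 0 → ∃ a, V (nfaRun δ S [a]) + 1 = V S) :
    ∀ (v : ℕ) (S : Finset (Fin n)), P S → V S = v →
      ∃ w : List (Fin m), w.length = v ∧ V (nfaRun δ S w) = 0 ∧ P (nfaRun δ S w)
  | 0, S, hS, hV => ⟨[], rfl, hV, hS⟩
  | v + 1, S, hS, hV => by
    obtain ⟨a, ha⟩ := hdec S hS (by omega)
    obtain ⟨w, hlen, hw⟩ :=
      exists_nfaRun_potential_eq_zero hP hdec v _ (hP S a hS) (by omega)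
    exact ⟨a :: w, by rw [List.length_cons, hlen], hw⟩

theorem nfaShortestSync_potential
    (hP : ∀ S a, P S → P (nfaRun δ S [a]))
    (hle : ∀ S a, P S → V S ≤ V (nfaRun δ S [a]) + 1)
    (hdec : ∀ S, P S → V S ≠ 0 → ∃ a, V (nfaRun δ S [a]) + 1 = V S)
    (hsync : ∀ S, P S → (S.card = 1 ↔ V S = 0))
    {S : Finset (Fin n)} (hS : P S) : nfaShortestSync δ S (V S) := by
  refine ⟨?_, fun w hw => ?_⟩
  · obtain ⟨w, hlen, hV, hPw⟩ := exists_nfaRun_potential_eq_zero P V hP hdec _ S hS rfl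
    exact ⟨w, (hsync _ hPw).2 hV, hlen⟩
  · obtain ⟨hPw, hVw⟩ := le_potential_nfaRun_add_length P V hP hle w S hS
    have := (hsync _ hPw).1 hw
    omega

end Potential

section Counter

variable {k t : ℕ} {S : Finset (Fin (k + 2))}

/-- States `0, …, k` are the bits of a binary counter and `Fin.last (k + 1)` is a sink. Letter `t`
clears bit `t` and sets all lower bits, but sends every state to `univ` when a lower bit is already
set; letters `t > k + 1` only serve to pad the alphabet to `2 * (k + 2) - 2` letters. -/
def counterDelta (k t : ℕ) (q : Fin (k + 2)) : Finset (Fin (k + 2)) :=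
  if t < q then {q}
  else if (q : ℕ) = t then insert (Fin.last (k + 1)) (univ.filter fun p => (p : ℕ) < t)
  else univ

def counterNFA (k : ℕ) (q : Fin (k + 2)) (a : Fin (2 * (k + 2) - 2)) : Finset (Fin (k + 2)) :=
  counterDelta k a q

theorem counterDelta_nonempty (q : Fin (k + 2)) : (counterDelta k t q).Nonempty := by
  unfold counterDelta
  split_ifs
  exacts [singleton_nonempty q, insert_nonempty _ _, univ_nonempty]

theorem last_mem_counterDelta_last : Fin.last (k + 1) ∈ counterDelta k t (Fin.last (k + 1)) := by
  unfold counterDelta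
  split_ifs <;> simp

theorem biUnion_counterDelta_of_lt {q : Fin (k + 2)} (hq : q ∈ S) (hqt : (q : ℕ) < t) :
    S.biUnion (counterDelta k t) = univ :=
  eq_univ_of_forall fun p =>
    mem_biUnion.2 ⟨q, hq, by
      rw [counterDelta, if_neg (by omega), if_neg (by omega)]
      exact mem_univ p⟩

theorem biUnion_counterDelta_of_forall_lt (hS : ∀ p ∈ S, t < (p : ℕ)) :
    S.biUnion (counterDelta k t) = S := by
  conv_rhs => rw [← S.biUnion_singleton_eq_self]
  exact biUnion_congr rfl fun p hp => if_pos (hS p hp)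

theorem biUnion_counterDelta_of_mem {q : Fin (k + 2)} (hS : ∀ p ∈ S, t ≤ (p : ℕ)) (hq : q ∈ S)
    (hqt : (q : ℕ) = t) :
    S.biUnion (counterDelta k t) =
      insert (Fin.last (k + 1)) (S.erase q ∪ univ.filter fun p => (p : ℕ) < t) := by
  ext x
  simp only [mem_biUnion, mem_insert, mem_union, mem_erase, mem_filter, mem_univ, true_and]
  constructor
  · rintro ⟨p, hp, hx⟩
    unfold counterDelta at hx
    split_ifs at hx
    · rw [mem_singleton] at hx
      subst hx
      exact Or.inr (Or.inl ⟨fun h => by subst h; omega, hp⟩)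
    · simp only [mem_insert, mem_filter, mem_univ, true_and] at hx
      tauto
    · exact absurd (hS p hp) (by omega)
  · rintro (rfl | ⟨hxq, hx⟩ | hx)
    · exact ⟨q, hq, by rw [counterDelta, if_neg (by omega), if_pos hqt]; exact mem_insert_self _ _⟩
    · have : t < (x : ℕ) := lt_of_le_of_ne (hS x hx) fun h => hxq (Fin.ext (by omega))
      exact ⟨x, hx, by rw [counterDelta, if_pos this]; exact mem_singleton_self x⟩
    · exact ⟨q, hq, by rw [counterDelta, if_neg (by omega), if_pos hqt]; simp [hx]⟩

def counterWeight (k : ℕ) (q : Fin (k + 2)) : ℕ :=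
  if q = Fin.last (k + 1) then 0 else 2 ^ (q : ℕ)

def counterValue (S : Finset (Fin (k + 2))) : ℕ :=
  ∑ q ∈ S, counterWeight k q

theorem counterWeight_le (q : Fin (k + 2)) : counterWeight k q ≤ 2 ^ (q : ℕ) := by
  unfold counterWeight
  split_ifs <;> simp

theorem counterValue_insert_last (S : Finset (Fin (k + 2))) :
    counterValue (insert (Fin.last (k + 1)) S) = counterValue S :=
  sum_insert_of_eq_zero_if_notMem fun _ => if_pos rfl

theorem counterValue_le_univ (S : Finset (Fin (k + 2))) :
    counterValue S ≤ counterValue (univ : Finset (Fin (k + 2))) :=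
  sum_le_sum_of_subset (subset_univ S)

theorem counterValue_filter_lt (ht : t ≤ k + 1) :
    counterValue (univ.filter fun p : Fin (k + 2) => (p : ℕ) < t) = 2 ^ t - 1 := by
  have hbits : ∀ q ∈ univ.filter fun p : Fin (k + 2) => (p : ℕ) < t,
      counterWeight k q = 2 ^ (q : ℕ) := fun q hq => by
    rw [counterWeight, if_neg]
    rintro rfl
    simp only [mem_filter, mem_univ, true_and, Fin.val_last] at hq
    omega
  have himage : (univ.filter fun p : Fin (k + 2) => (p : ℕ) < t).image Fin.val = range t := by
    ext i
    simp only [mem_image, mem_filter, mem_univ, true_and, mem_range]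
    exact ⟨fun ⟨p, hp, hpi⟩ => hpi ▸ hp, fun hi => ⟨⟨i, by omega⟩, hi, rfl⟩⟩
  rw [counterValue, sum_congr rfl hbits, ← sum_image Fin.val_injective.injOn, himage,
    Nat.geomSum_eq le_rfl, Nat.div_one]

theorem counterValue_univ : counterValue (univ : Finset (Fin (k + 2))) = 2 ^ (k + 1) - 1 := by
  have : (univ : Finset (Fin (k + 2))) =
      insert (Fin.last (k + 1)) (univ.filter fun p : Fin (k + 2) => (p : ℕ) < k + 1) := by
    ext x
    simp [Fin.ext_iff]
    omega
  rw [this, counterValue_insert_last, counterValue_filter_lt le_rfl]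

theorem counterValue_eq_zero_iff (hS : Fin.last (k + 1) ∈ S) :
    counterValue S = 0 ↔ S = {Fin.last (k + 1)} := by
  simp only [counterValue, sum_eq_zero_iff, counterWeight, eq_singleton_iff_unique_mem, hS,
    true_and]
  exact forall₂_congr fun q _ => by split_ifs <;> simp_all

theorem counterValue_biUnion_counterDelta_of_mem {q : Fin (k + 2)} (hS : ∀ p ∈ S, t ≤ (p : ℕ))
    (hq : q ∈ S) (hqt : (q : ℕ) = t) :
    counterValue (S.biUnion (counterDelta k t)) + counterWeight k q + 1 =
      counterValue S + 2 ^ t := by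
  have hdisj : Disjoint (S.erase q) (univ.filter fun p : Fin (k + 2) => (p : ℕ) < t) :=
    disjoint_left.2 fun p hp hpt => by
      have := hS p (mem_of_mem_erase hp)
      simp only [mem_filter, mem_univ, true_and] at hpt
      omega
  have hlow := counterValue_filter_lt (k := k) (t := t) (by omega)
  have herase : counterWeight k q + counterValue (S.erase q) = counterValue S :=
    add_sum_erase S _ hq
  rw [biUnion_counterDelta_of_mem hS hq hqt, counterValue_insert_last]
  unfold counterValue at hlow herase ⊢
  rw [sum_union hdisj, hlow, ← herase]
  have := Nat.one_le_two_pow (n := t)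
  omega

theorem counterValue_le_biUnion_counterDelta_add_one (S : Finset (Fin (k + 2))) (t : ℕ) :
    counterValue S ≤ counterValue (S.biUnion (counterDelta k t)) + 1 := by
  by_cases hlow : ∃ q ∈ S, (q : ℕ) < t
  · obtain ⟨q, hq, hqt⟩ := hlow
    rw [biUnion_counterDelta_of_lt hq hqt]
    exact (counterValue_le_univ S).trans (Nat.le_succ _)
  push Not at hlow
  by_cases hmem : ∃ q ∈ S, (q : ℕ) = t
  · obtain ⟨q, hq, hqt⟩ := hmem
    have := counterValue_biUnion_counterDelta_of_mem hlow hq hqt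
    have := hqt ▸ counterWeight_le q
    omega
  · push Not at hmem
    rw [biUnion_counterDelta_of_forall_lt fun p hp => (hlow p hp).lt_of_ne (hmem p hp).symm]
    exact Nat.le_succ _

theorem exists_counterValue_biUnion_counterDelta_add_one (hS : Fin.last (k + 1) ∈ S)
    (hV : counterValue S ≠ 0) :
    ∃ t ≤ k, counterValue (S.biUnion (counterDelta k t)) + 1 = counterValue S := by
  have hne : (S.erase (Fin.last (k + 1))).Nonempty := by
    rw [nonempty_iff_ne_empty, Ne, erase_eq_empty_iff, ← counterValue_eq_zero_iff hS]
    rintro (rfl | h)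
    exacts [hV rfl, hV h]
  obtain ⟨i, hi_erase, hi_min⟩ :
      ∃ i ∈ S.erase (Fin.last (k + 1)), ∀ p ∈ S.erase (Fin.last (k + 1)), i ≤ p :=
    ⟨_, min'_mem _ hne, fun p hp => min'_le _ p hp⟩
  obtain ⟨hi_last, hiS⟩ := mem_erase.1 hi_erase
  have hmin : ∀ p ∈ S, (i : ℕ) ≤ p := fun p hp => by
    by_cases hp_last : p = Fin.last (k + 1)
    · exact hp_last ▸ Fin.le_last i
    · exact hi_min p (mem_erase.2 ⟨hp_last, hp⟩)
  have hi := counterValue_biUnion_counterDelta_of_mem hmin hiS rfl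
  rw [counterWeight, if_neg hi_last] at hi
  exact ⟨i, Nat.lt_succ_iff.1 (Fin.val_lt_last hi_last), by omega⟩

theorem counterNFA_shortestSync (hS : Fin.last (k + 1) ∈ S) :
    nfaShortestSync (counterNFA k) S (counterValue S) :=
  nfaShortestSync_potential (fun S => Fin.last (k + 1) ∈ S) counterValue
    (fun _ _ hS => mem_biUnion.2 ⟨_, hS, last_mem_counterDelta_last⟩)
    (fun S a _ => counterValue_le_biUnion_counterDelta_add_one S a)
    (fun _ hS hV =>
      let ⟨t, ht, h⟩ := exists_counterValue_biUnion_counterDelta_add_one hS hV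
      ⟨⟨t, by omega⟩, h⟩)
    (fun S hS => by
      rw [counterValue_eq_zero_iff hS, card_eq_one]
      refine ⟨fun ⟨a, ha⟩ => ?_, fun h => ⟨_, h⟩⟩
      rw [ha, mem_singleton] at hS
      rw [ha, hS])
    hS

end Counter

theorem stmt2 (n : ℕ) (hn : 2 ≤ n) :
    ∃ δ : Fin n → Fin (2 * n - 2) → Finset (Fin n),
      (∀ q a, (δ q a).Nonempty) ∧
      nfaShortestSync δ Finset.univ (2 ^ (n - 1) - 1) ∧
      nfaShortestSync δ ({⟨n - 2, by omega⟩, ⟨n - 1, by omega⟩} : Finset (Fin n))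
        (2 ^ (n - 2)) := by
  obtain ⟨k, rfl⟩ : ∃ k, n = k + 2 := ⟨n - 2, by omega⟩
  refine ⟨counterNFA k, fun q a => counterDelta_nonempty q, ?_, ?_⟩
  · have := counterNFA_shortestSync (mem_univ (Fin.last (k + 1)))
    rwa [counterValue_univ] at this
  · have hvalue :
        counterValue ({⟨k, by omega⟩, Fin.last (k + 1)} : Finset (Fin (k + 2))) = 2 ^ k := by
      simp [counterValue, counterWeight, Fin.ext_iff]
    have := counterNFA_shortestSync (S := {⟨k, by omega⟩, Fin.last (k + 1)}) (by simp)
    rwa [hvalue] at this
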